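/- arXiv:2411.10696 — 4 statements merged into one kernel-verified Lean document; each statement's English description precedes it below -/
import Mathlib

section
/- If L(θ) − min L ≤ μ R² / 4, then ‖θ − θ*‖₂ ≤ R (Lemma 2, Parameter Bound). -/
/-!
Suppose `‖θ - θs‖ > R` and let `p = θs + u` be the point of the segment `[θs, θ]` with
`‖u‖ = R`. On `[θs, p]` Assumption 2 gives `∇²L ⪰ ½ ∇²L(θs) ⪰ (μ/2) I`, so integrating twice
along the segment from the critical point `θs` yields `L p - L θs ≥ μ R² / 4`. Convexity bounds
the same difference from above by `(R / ‖θ - θs‖) (L θ - L θs) < μ R² / 4`.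
-/

open Matrix Filter
open scoped RealInnerProductSpace

noncomputable def hessQF {d : ℕ} (A : Matrix (Fin d) (Fin d) ℝ)
    (v : EuclideanSpace ℝ (Fin d)) : ℝ :=
  ⟪v, Matrix.toEuclideanLin A v⟫

open Set

theorem monotoneOn_Icc_of_hasDerivAt_nonneg {a b : ℝ} {f f' : ℝ → ℝ}
    (hf : ∀ t ∈ Icc a b, HasDerivAt f (f' t) t) (hf' : ∀ t ∈ Icc a b, 0 ≤ f' t) :
    MonotoneOn f (Icc a b) :=
  monotoneOn_of_hasDerivWithinAt_nonneg (convex_Icc a b)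
    (fun t ht => (hf t ht).continuousAt.continuousWithinAt)
    (fun t ht => (hf t (interior_subset ht)).hasDerivWithinAt)
    (fun t ht => hf' t (interior_subset ht))

theorem half_mul_le_sub_of_le_deriv_deriv {f f' f'' : ℝ → ℝ} {c : ℝ}
    (hf : ∀ t ∈ Icc (0 : ℝ) 1, HasDerivAt f (f' t) t)
    (hf' : ∀ t ∈ Icc (0 : ℝ) 1, HasDerivAt f' (f'' t) t) (hf'0 : f' 0 = 0)
    (hc : ∀ t ∈ Icc (0 : ℝ) 1, c ≤ f'' t) :
    c / 2 ≤ f 1 - f 0 := by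
  have hzero : (0 : ℝ) ∈ Icc (0 : ℝ) 1 := left_mem_Icc.2 zero_le_one
  have hlin : ∀ t ∈ Icc (0 : ℝ) 1, c * t ≤ f' t := by
    have hmono : MonotoneOn (fun t => f' t - c * t) (Icc 0 1) :=
      monotoneOn_Icc_of_hasDerivAt_nonneg
        (fun t ht => (hf' t ht).sub ((hasDerivAt_id t).const_mul c |>.congr_deriv (mul_one c)))
        (fun t ht => sub_nonneg.2 (hc t ht))
    intro t ht
    linarith [hmono hzero ht ht.1]
  have hmono : MonotoneOn (fun t => f t - c / 2 * t ^ 2) (Icc 0 1) :=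
    monotoneOn_Icc_of_hasDerivAt_nonneg (f' := fun t => f' t - c * t)
      (fun t ht => (hf t ht).sub (((hasDerivAt_pow 2 t).const_mul (c / 2)).congr_deriv
        (by push_cast; ring)))
      (fun t ht => by linarith [hlin t ht])
  linarith [hmono hzero (right_mem_Icc.2 zero_le_one) zero_le_one]

theorem ConvexOn.sub_le_mul_sub {E : Type*} [AddCommGroup E] [Module ℝ E] {f : E → ℝ}
    (hf : ConvexOn ℝ univ f) (x y : E) {t : ℝ} (ht₀ : 0 ≤ t) (ht₁ : t ≤ 1) :
    f (x + t • (y - x)) - f x ≤ t * (f y - f x) := by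
  have h := hf.2 (mem_univ x) (mem_univ y) (sub_nonneg.2 ht₁) ht₀ (sub_add_cancel 1 t)
  have hxy : (1 - t) • x + t • y = x + t • (y - x) := by module
  rw [hxy, smul_eq_mul, smul_eq_mul] at h
  linarith

theorem hasDerivAt_add_smul {E : Type*} [NormedAddCommGroup E] [NormedSpace ℝ E]
    (x u : E) (t : ℝ) : HasDerivAt (fun s : ℝ => x + s • u) u t := by
  simpa using ((hasDerivAt_id t).smul_const u).const_add x

section Gradient

variable {E : Type*} [NormedAddCommGroup E] [InnerProductSpace ℝ E] [CompleteSpace E]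
  {L : E → ℝ}

theorem hasDerivAt_comp_add_smul (hL : Differentiable ℝ L) (x u : E) (t : ℝ) :
    HasDerivAt (fun s : ℝ => L (x + s • u)) ⟪gradient L (x + t • u), u⟫ t := by
  simpa [Function.comp_def] using
    (hL (x + t • u)).hasGradientAt.hasFDerivAt.comp_hasDerivAt t (hasDerivAt_add_smul x u t)

end Gradient

section Hessian

variable {d : ℕ} {L : EuclideanSpace ℝ (Fin d) → ℝ}
  {H : EuclideanSpace ℝ (Fin d) → Matrix (Fin d) (Fin d) ℝ}

theorem hasDerivAt_inner_gradient_comp_add_smul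
    (hH : ∀ x, HasFDerivAt (gradient L)
      (LinearMap.toContinuousLinearMap (Matrix.toEuclideanLin (H x))) x)
    (x u : EuclideanSpace ℝ (Fin d)) (t : ℝ) :
    HasDerivAt (fun s : ℝ => ⟪gradient L (x + s • u), u⟫) (hessQF (H (x + t • u)) u) t := by
  have hgrad : HasDerivAt (fun s : ℝ => gradient L (x + s • u))
      (Matrix.toEuclideanLin (H (x + t • u)) u) t := by
    simpa [Function.comp_def] using
      (hH (x + t • u)).comp_hasDerivAt t (hasDerivAt_add_smul x u t)
  simpa [hessQF, real_inner_comm] using hgrad.inner ℝ (hasDerivAt_const t u)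

theorem half_mul_le_sub_of_le_hessQF (hL : Differentiable ℝ L)
    (hH : ∀ x, HasFDerivAt (gradient L)
      (LinearMap.toContinuousLinearMap (Matrix.toEuclideanLin (H x))) x)
    {x u : EuclideanSpace ℝ (Fin d)} (hx : gradient L x = 0) {c : ℝ}
    (hc : ∀ t ∈ Icc (0 : ℝ) 1, c ≤ hessQF (H (x + t • u)) u) :
    c / 2 ≤ L (x + u) - L x := by
  simpa using half_mul_le_sub_of_le_deriv_deriv
    (fun t _ => hasDerivAt_comp_add_smul hL x u t)
    (fun t _ => hasDerivAt_inner_gradient_comp_add_smul hH x u t) (by simp [hx]) hc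

theorem mul_sq_div_four_le_sub_of_norm_le (hL : Differentiable ℝ L)
    (hH : ∀ x, HasFDerivAt (gradient L)
      (LinearMap.toContinuousLinearMap (Matrix.toEuclideanLin (H x))) x)
    {x : EuclideanSpace ℝ (Fin d)} (hx : gradient L x = 0) {μ R : ℝ}
    (hμ : ∀ v, μ * ‖v‖ ^ 2 ≤ hessQF (H x) v)
    (hcomp : ∀ y, ‖y - x‖ ≤ R → ∀ v, (1/2) * hessQF (H x) v ≤ hessQF (H y) v)
    {u : EuclideanSpace ℝ (Fin d)} (hu : ‖u‖ ≤ R) :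
    μ * ‖u‖ ^ 2 / 4 ≤ L (x + u) - L x := by
  have := half_mul_le_sub_of_le_hessQF hL hH hx (u := u) (c := μ * ‖u‖ ^ 2 / 2) fun t ht => by
    have hdist : ‖x + t • u - x‖ ≤ R := by
      rw [add_sub_cancel_left, norm_smul, Real.norm_of_nonneg ht.1]
      exact (mul_le_of_le_one_left (norm_nonneg u) ht.2).trans hu
    linarith [hcomp _ hdist u, hμ u]
  linarith

end Hessian

theorem stmt_2_general (d : ℕ)
    (L : EuclideanSpace ℝ (Fin d) → ℝ) (hL : ContDiff ℝ 2 L)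
    (hconv : StrictConvexOn ℝ Set.univ L)
    (θs : EuclideanSpace ℝ (Fin d))
    (hgrad0 : gradient L θs = 0)
    (H : EuclideanSpace ℝ (Fin d) → Matrix (Fin d) (Fin d) ℝ)
    (hH : ∀ x, HasFDerivAt (gradient L)
      (LinearMap.toContinuousLinearMap (Matrix.toEuclideanLin (H x))) x)
    (μ : ℝ) (hμpos : 0 < μ)
    (hμlb : ∀ v : EuclideanSpace ℝ (Fin d), μ * ‖v‖ ^ 2 ≤ hessQF (H θs) v)
    (R : ℝ) (hR : 0 < R)
    (hA2 : ∀ θ θ' : EuclideanSpace ℝ (Fin d), ‖θ - θ'‖ ≤ R →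
      ∀ v, (1/2) * hessQF (H θ') v ≤ hessQF (H θ) v ∧
        hessQF (H θ) v ≤ 2 * hessQF (H θ') v)
    (θ : EuclideanSpace ℝ (Fin d))
    (hloss : L θ - L θs ≤ μ * R ^ 2 / 4) :
    ‖θ - θs‖ ≤ R := by
  by_contra! hfar
  have hdist_pos : 0 < ‖θ - θs‖ := hR.trans hfar
  set t := R / ‖θ - θs‖
  have ht_pos : 0 < t := div_pos hR hdist_pos
  have ht_lt : t < 1 := (div_lt_one hdist_pos).2 hfar
  have hu : ‖t • (θ - θs)‖ = R := by
    rw [norm_smul, Real.norm_of_nonneg ht_pos.le, div_mul_cancel₀ R hdist_pos.ne']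
  have hgrowth := mul_sq_div_four_le_sub_of_norm_le (hL.differentiable (by norm_num)) hH hgrad0
    hμlb (fun y hy v => (hA2 y θs hy v).1) hu.le
  rw [hu] at hgrowth
  have hcontra : μ * R ^ 2 / 4 < μ * R ^ 2 / 4 := calc
    μ * R ^ 2 / 4 ≤ L (θs + t • (θ - θs)) - L θs := hgrowth
    _ ≤ t * (L θ - L θs) := hconv.convexOn.sub_le_mul_sub θs θ ht_pos.le ht_lt.le
    _ ≤ t * (μ * R ^ 2 / 4) := by gcongr
    _ < μ * R ^ 2 / 4 := mul_lt_of_lt_one_left (by positivity) ht_lt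
  exact lt_irrefl _ hcontra

/-- Lemma 2 (Parameter Bound): if `L θ - min L ≤ μ R² / 4` then `‖θ - θ*‖ ≤ R`. -/
theorem stmt_2 (d : ℕ) (hd : 1 ≤ d)
    (L : EuclideanSpace ℝ (Fin d) → ℝ) (hL : ContDiff ℝ 2 L)
    (hconv : StrictConvexOn ℝ Set.univ L)
    (θs : EuclideanSpace ℝ (Fin d))
    (hmin : ∀ θ, θ ≠ θs → L θs < L θ)
    (hgrad0 : gradient L θs = 0)
    (H : EuclideanSpace ℝ (Fin d) → Matrix (Fin d) (Fin d) ℝ)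
    (hH : ∀ x, HasFDerivAt (gradient L)
      (LinearMap.toContinuousLinearMap (Matrix.toEuclideanLin (H x))) x)
    (hpd : ∀ x, (H x).PosDef)
    (μ : ℝ) (hμpos : 0 < μ)
    (hμlb : ∀ v : EuclideanSpace ℝ (Fin d), μ * ‖v‖ ^ 2 ≤ hessQF (H θs) v)
    (hμeig : ∃ v : EuclideanSpace ℝ (Fin d), v ≠ 0 ∧
      Matrix.toEuclideanLin (H θs) v = μ • v)
    (R : ℝ) (hR : 0 < R)
    (hA2 : ∀ θ θ' : EuclideanSpace ℝ (Fin d), ‖θ - θ'‖ ≤ R →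
      ∀ v, (1/2) * hessQF (H θ') v ≤ hessQF (H θ) v ∧
        hessQF (H θ) v ≤ 2 * hessQF (H θ') v)
    (θ : EuclideanSpace ℝ (Fin d))
    (hloss : L θ - L θs ≤ μ * R ^ 2 / 4) :
    ‖θ - θs‖ ≤ R :=
  stmt_2_general d L hL hconv θs hgrad0 H hH μ hμpos hμlb R hR hA2 θ hloss
end

section
/- If ‖∇L(θ)‖₂ ≤ μ R / 2, then ‖θ − θ*‖₂ ≤ R (Lemma 3, Gradient Norm Bound). -/
/-
If `θ` were farther than `R` from `θ*`, look at `φ t = ⟪∇L (θ* + t (θ - θ*)), θ - θ*⟫`. Its derivative is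
the Hessian quadratic form in the direction `θ - θ*`, which is positive everywhere and, by Assumption 2
and `∇²L(θ*) ⪰ μ`, at least `μ ‖θ - θ*‖² / 2` as long as the point stays in the ball of radius `R`.
Hence `φ` grows from `φ 0 = 0` to more than `μ R ‖θ - θ*‖ / 2` at `t = 1`, while Cauchy–Schwarz bounds
`φ 1` by `‖∇L θ‖ ‖θ - θ*‖ ≤ μ R ‖θ - θ*‖ / 2`.
-/

open Matrix Filter
open scoped RealInnerProductSpace

lemma hessQF_pos {d : ℕ} {A : Matrix (Fin d) (Fin d) ℝ} (hA : A.PosDef)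
    {v : EuclideanSpace ℝ (Fin d)} (hv : v ≠ 0) : 0 < hessQF A v := by
  have h := hA.dotProduct_mulVec_pos (x := WithLp.equiv 2 _ v) (by simpa using hv)
  simpa [hessQF, PiLp.inner_apply, dotProduct, mul_comm] using h

lemma hessQF_eq_inner {d : ℕ} (A : Matrix (Fin d) (Fin d) ℝ) (v : EuclideanSpace ℝ (Fin d)) :
    hessQF A v = ⟪LinearMap.toContinuousLinearMap (Matrix.toEuclideanLin A) v, v⟫ := by
  simp [hessQF, real_inner_comm]

section InnerProductSpace

variable {E : Type*} [NormedAddCommGroup E] [InnerProductSpace ℝ E]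

lemma hasDerivAt_inner_apply_add_smul {g : E → E} {g' : E →L[ℝ] E} {a u : E} {t : ℝ}
    (hg : HasFDerivAt g g' (a + t • u)) :
    HasDerivAt (fun s : ℝ => ⟪g (a + s • u), u⟫) ⟪g' u, u⟫ t := by
  have hline : HasDerivAt (fun s : ℝ => a + s • u) u t := by
    simpa using ((hasDerivAt_id t).smul_const u).const_add a
  exact (hg.comp_hasDerivAt t hline).inner ℝ (hasDerivAt_const t u) |>.congr_deriv (by simp)

theorem norm_sub_le_of_norm_le_of_coercive {g : E → E} {g' : E → E →L[ℝ] E} {x₀ x : E} {c R : ℝ}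
    (hg : ∀ y, HasFDerivAt g (g' y) y) (hx₀ : g x₀ = 0)
    (hpos : ∀ y v, v ≠ 0 → 0 < ⟪g' y v, v⟫)
    (hcoer : ∀ y, ‖y - x₀‖ ≤ R → ∀ v, c * ‖v‖ ^ 2 ≤ ⟪g' y v, v⟫)
    (hR : 0 ≤ R) (hgx : ‖g x‖ ≤ c * R) :
    ‖x - x₀‖ ≤ R := by
  by_contra! hfar
  set w := x - x₀
  set s := ‖w‖
  have hs : 0 < s := hR.trans_lt hfar
  have hw : w ≠ 0 := norm_pos_iff.mp hs
  set φ := fun t : ℝ => ⟪g (x₀ + t • w), w⟫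
  have hφ : ∀ t, HasDerivAt φ ⟪g' (x₀ + t • w) w, w⟫ t := fun t =>
    hasDerivAt_inner_apply_add_smul (hg _)
  have hφ_mono : StrictMono φ :=
    strictMono_of_deriv_pos fun t => (hφ t).deriv ▸ hpos _ _ hw
  have hRs : R / s ∈ Set.Icc 0 1 := ⟨div_nonneg hR hs.le, (div_lt_one hs).mpr hfar |>.le⟩
  have hφ_growth : c * s ^ 2 * (R / s - 0) ≤ φ (R / s) - φ 0 := by
    refine (convex_Icc (0 : ℝ) (R / s)).mul_sub_le_image_sub_of_le_deriv
      (fun t _ => (hφ t).continuousAt.continuousWithinAt)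
      (fun t _ => (hφ t).differentiableAt.differentiableWithinAt) (fun t ht => ?_)
      0 (Set.left_mem_Icc.2 hRs.1) (R / s) (Set.right_mem_Icc.2 hRs.1) hRs.1
    rw [interior_Icc] at ht
    rw [(hφ t).deriv]
    refine hcoer _ ?_ w
    rw [add_sub_cancel_left, norm_smul, Real.norm_of_nonneg ht.1.le]
    exact (le_div_iff₀ hs).mp ht.2.le
  have hφ_zero : φ 0 = 0 := by simp [φ, hx₀]
  have hφ_one : φ 1 ≤ c * R * s := by
    calc φ 1 = ⟪g x, w⟫ := by simp [φ, w]
      _ ≤ ‖g x‖ * s := real_inner_le_norm _ _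
      _ ≤ c * R * s := mul_le_mul_of_nonneg_right hgx hs.le
  have hlt : φ (R / s) < φ 1 := hφ_mono ((div_lt_one hs).mpr hfar)
  have : c * s ^ 2 * (R / s - 0) = c * R * s := by rw [sub_zero]; field_simp
  linarith

end InnerProductSpace

theorem stmt_3_general (d : ℕ)
    (L : EuclideanSpace ℝ (Fin d) → ℝ)
    (θs : EuclideanSpace ℝ (Fin d))
    (hgrad0 : gradient L θs = 0)
    (H : EuclideanSpace ℝ (Fin d) → Matrix (Fin d) (Fin d) ℝ)
    (hH : ∀ x, HasFDerivAt (gradient L)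
      (LinearMap.toContinuousLinearMap (Matrix.toEuclideanLin (H x))) x)
    (hpd : ∀ x, (H x).PosDef)
    (μ : ℝ)
    (hμlb : ∀ v : EuclideanSpace ℝ (Fin d), μ * ‖v‖ ^ 2 ≤ hessQF (H θs) v)
    (R : ℝ) (hR : 0 < R)
    (hA2 : ∀ θ θ' : EuclideanSpace ℝ (Fin d), ‖θ - θ'‖ ≤ R →
      ∀ v, (1/2) * hessQF (H θ') v ≤ hessQF (H θ) v ∧
        hessQF (H θ) v ≤ 2 * hessQF (H θ') v)
    (θ : EuclideanSpace ℝ (Fin d))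
    (hgradnorm : ‖gradient L θ‖ ≤ μ * R / 2) :
    ‖θ - θs‖ ≤ R := by
  refine norm_sub_le_of_norm_le_of_coercive (c := μ / 2) hH hgrad0 (fun x v hv => ?_)
    (fun x hx v => ?_) hR.le (by linarith)
  · exact hessQF_eq_inner (H x) v ▸ hessQF_pos (hpd x) hv
  · rw [← hessQF_eq_inner]
    linarith [(hA2 x θs hx v).1, hμlb v]

/-- Lemma 3 (Gradient Norm Bound): if `‖∇L θ‖ ≤ μ R / 2` then `‖θ - θ*‖ ≤ R`. -/
theorem stmt_3 (d : ℕ) (hd : 1 ≤ d)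
    (L : EuclideanSpace ℝ (Fin d) → ℝ) (hL : ContDiff ℝ 2 L)
    (hconv : StrictConvexOn ℝ Set.univ L)
    (θs : EuclideanSpace ℝ (Fin d))
    (hmin : ∀ θ, θ ≠ θs → L θs < L θ)
    (hgrad0 : gradient L θs = 0)
    (H : EuclideanSpace ℝ (Fin d) → Matrix (Fin d) (Fin d) ℝ)
    (hH : ∀ x, HasFDerivAt (gradient L)
      (LinearMap.toContinuousLinearMap (Matrix.toEuclideanLin (H x))) x)
    (hpd : ∀ x, (H x).PosDef)
    (μ : ℝ) (hμpos : 0 < μ)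
    (hμlb : ∀ v : EuclideanSpace ℝ (Fin d), μ * ‖v‖ ^ 2 ≤ hessQF (H θs) v)
    (hμeig : ∃ v : EuclideanSpace ℝ (Fin d), v ≠ 0 ∧
      Matrix.toEuclideanLin (H θs) v = μ • v)
    (R : ℝ) (hR : 0 < R)
    (hA2 : ∀ θ θ' : EuclideanSpace ℝ (Fin d), ‖θ - θ'‖ ≤ R →
      ∀ v, (1/2) * hessQF (H θ') v ≤ hessQF (H θ) v ∧
        hessQF (H θ) v ≤ 2 * hessQF (H θ') v)
    (θ : EuclideanSpace ℝ (Fin d))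
    (hgradnorm : ‖gradient L θ‖ ≤ μ * R / 2) :
    ‖θ - θs‖ ≤ R :=
  stmt_3_general d L θs hgrad0 H hH hpd μ hμlb R hR hA2 θ hgradnorm
end

section
/- For every starting point θ₀ there exists a continuously differentiable path θ : [0,1] → ℝ^d with θ(0) = θ₀ and θ(1) = θ*, satisfying the differential equation θ'(t) = −(∇²L(θ(t)))⁻¹ ∇L(θ₀) for all t ∈ [0,1], and along which the gradient interpolates linearly: ∇L(θ(t)) = (1 − t)·∇L(θ₀) for all t ∈ [0,1] (Lemma 4, Stability of Gradient Flow). -/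
open Matrix Filter
open scoped RealInnerProductSpace Gradient

/-!
Strict convexity makes `∇L` injective, and invertibility of the Hessian makes it a local
diffeomorphism, so `∇L` is a diffeomorphism onto its open range. The path is
`γ t = (∇L)⁻¹ ((1 - t) • ∇L θ₀)`, and the differential equation is the chain rule for this inverse.
The segment from `∇L θ₀` to `0` lies in the range by connectedness: its part in the range is open,
and it is also closed because, by convexity, every `x` with `∇L x = c • ∇L θ₀`, `0 ≤ c ≤ 1`, lies
in the sublevel set `{L ≤ L θ₀}`, which is compact by coercivity.
-/

lemma Continuous.isCompact_sublevel_of_tendsto_cocompact {X : Type*} [TopologicalSpace X]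
    {f : X → ℝ} (hf : Continuous f) (hlim : Tendsto f (cocompact X) atTop) (c : ℝ) :
    IsCompact {x | f x ≤ c} := by
  obtain ⟨K, hK, hKc⟩ := mem_cocompact.1 (hlim.eventually (eventually_gt_atTop c))
  refine hK.of_isClosed_subset (isClosed_le hf continuous_const) fun x (hx : f x ≤ c) => ?_
  by_contra hxK
  exact not_lt.2 hx (hKc hxK)

lemma IsPreconnected.subset_preimage_range {α X Y : Type*} [TopologicalSpace α]
    [TopologicalSpace X] [TopologicalSpace Y] [T2Space Y] {s : Set α} (hs : IsPreconnected s)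
    {u : α → Y} (hu : Continuous u) {F : X → Y} (hF : Continuous F)
    (hopen : IsOpen (Set.range F)) {K : Set X} (hK : IsCompact K)
    (hfiber : ∀ t ∈ s, ∀ x, F x = u t → x ∈ K) {t₀ : α} (ht₀ : t₀ ∈ s)
    (hut₀ : u t₀ ∈ Set.range F) : s ⊆ u ⁻¹' Set.range F := by
  intro t ht
  by_contra hout
  have hcover : s ⊆ u ⁻¹' (F '' K) ∪ u ⁻¹' (Set.range F)ᶜ := by
    rintro t ht
    by_cases hmem : u t ∈ Set.range F
    · obtain ⟨x, hx⟩ := hmem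
      exact Or.inl ⟨x, hfiber t ht x hx, hx⟩
    · exact Or.inr hmem
  obtain ⟨t₁, -, hin, hout⟩ := isPreconnected_closed_iff.1 hs _ _
    ((hK.image hF).isClosed.preimage hu) (hopen.isClosed_compl.preimage hu) hcover
    (by obtain ⟨x, hx⟩ := hut₀; exact ⟨t₀, ht₀, x, hfiber t₀ ht₀ x hx, hx⟩) ⟨t, ht, hout⟩
  exact hout (Set.image_subset_range F K hin)

lemma isOpenEmbedding_of_hasStrictFDerivAt_equiv {E F : Type*} [NormedAddCommGroup E]
    [NormedSpace ℝ E] [CompleteSpace E] [NormedAddCommGroup F] [NormedSpace ℝ F]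
    {f : E → F} {f' : E → E ≃L[ℝ] F} (hf : ∀ x, HasStrictFDerivAt f (f' x : E →L[ℝ] F) x)
    (hinj : Function.Injective f) : Topology.IsOpenEmbedding f :=
  .of_continuous_injective_isOpenMap
    (continuous_iff_continuousAt.2 fun x => (hf x).hasFDerivAt.continuousAt) hinj
    (isOpenMap_of_hasStrictFDerivAt_equiv hf)

section
variable {𝕜 n : Type*} [RCLike 𝕜] [Fintype n] [DecidableEq n]

noncomputable def Matrix.toEuclideanCLE (A : Matrix n n 𝕜) (hA : IsUnit A.det) :
    EuclideanSpace 𝕜 n ≃L[𝕜] EuclideanSpace 𝕜 n :=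
  ContinuousLinearEquiv.unitsEquiv 𝕜 _
    ((A.nonsingInvUnit hA).map (toEuclideanCLM (𝕜 := 𝕜) (n := n) : Matrix n n 𝕜 →* _))

@[simp]
lemma Matrix.coe_toEuclideanCLE (A : Matrix n n 𝕜) (hA : IsUnit A.det) :
    (A.toEuclideanCLE hA : EuclideanSpace 𝕜 n →L[𝕜] EuclideanSpace 𝕜 n) =
      LinearMap.toContinuousLinearMap (toEuclideanLin A) :=
  rfl

@[simp]
lemma Matrix.toEuclideanCLE_symm_apply (A : Matrix n n 𝕜) (hA : IsUnit A.det)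
    (v : EuclideanSpace 𝕜 n) : (A.toEuclideanCLE hA).symm v = toEuclideanLin A⁻¹ v :=
  rfl

end

section
variable {E : Type*} [NormedAddCommGroup E] [InnerProductSpace ℝ E] [CompleteSpace E] {f : E → ℝ}

lemma ContDiff.gradient {m n : WithTop ℕ∞} (hf : ContDiff ℝ n f) (hmn : m + 1 ≤ n) :
    ContDiff ℝ m (∇ f) :=
  (InnerProductSpace.toDual ℝ E).symm.contDiff.comp (hf.fderiv_right hmn)

lemma ConvexOn.add_inner_gradient_le (hf : ConvexOn ℝ Set.univ f) {x : E}
    (hx : DifferentiableAt ℝ f x) (y : E) : f x + ⟪∇ f x, y - x⟫ ≤ f y := by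
  have hφ : ConvexOn ℝ Set.univ (f ∘ (AffineMap.lineMap x y : ℝ →ᵃ[ℝ] E)) := by
    simpa using hf.comp_affineMap (AffineMap.lineMap x y : ℝ →ᵃ[ℝ] E)
  have hφ' : HasDerivAt (f ∘ (AffineMap.lineMap x y : ℝ →ᵃ[ℝ] E)) ⟪∇ f x, y - x⟫ 0 := by
    simpa using hx.hasGradientAt.hasFDerivAt.comp_hasDerivAt_of_eq (x := (0 : ℝ))
      AffineMap.hasDerivAt_lineMap (by simp)
  have hslope := hφ.le_slope_of_hasDerivAt (Set.mem_univ 0) (Set.mem_univ 1) one_pos hφ'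
  simp only [slope_def_field, Function.comp_apply, AffineMap.lineMap_apply_zero,
    AffineMap.lineMap_apply_one, sub_zero, div_one] at hslope
  linarith

lemma StrictConvexOn.injective_gradient (hf : StrictConvexOn ℝ Set.univ f)
    (hd : Differentiable ℝ f) : Function.Injective (∇ f) := by
  intro x y hxy
  by_contra hne
  set m : E := (2 : ℝ)⁻¹ • x + (2 : ℝ)⁻¹ • y
  have hx := hf.convexOn.add_inner_gradient_le (hd x) m
  have hy := hf.convexOn.add_inner_gradient_le (hd y) m
  have hmid : f m < (2 : ℝ)⁻¹ * f x + (2 : ℝ)⁻¹ * f y := hf.2 (Set.mem_univ x) (Set.mem_univ y)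
    hne (by norm_num) (by norm_num) (by norm_num)
  have hcancel : ⟪∇ f x, m - x⟫ + ⟪∇ f y, m - y⟫ = 0 := by
    rw [hxy, ← inner_add_right, show m - x + (m - y) = 0 by module, inner_zero_right]
  linarith

lemma StrictConvexOn.le_of_gradient_eq_smul (hf : StrictConvexOn ℝ Set.univ f)
    (hd : Differentiable ℝ f) {x y : E} {c : ℝ} (hc₀ : 0 ≤ c) (hc₁ : c ≤ 1)
    (h : ∇ f x = c • ∇ f y) : f x ≤ f y := by
  rcases hc₁.eq_or_lt with rfl | hc₁
  · have hxy : x = y := hf.injective_gradient hd (by simpa using h)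
    rw [hxy]
  have hx := hf.convexOn.add_inner_gradient_le (hd x) y
  have hy := hf.convexOn.add_inner_gradient_le (hd y) x
  rw [h, real_inner_smul_left] at hx
  rw [← neg_sub y x, inner_neg_right] at hy
  nlinarith

lemma StrictConvexOn.smul_gradient_mem_range (hf : StrictConvexOn ℝ Set.univ f)
    (hd : Differentiable ℝ f) (hcont : Continuous (∇ f)) (hopen : IsOpen (Set.range (∇ f)))
    (hcoer : Tendsto f (cocompact E) atTop) (y : E) {c : ℝ} (hc : c ∈ Set.Icc (0 : ℝ) 1) :
    c • ∇ f y ∈ Set.range (∇ f) :=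
  isPreconnected_Icc.subset_preimage_range (u := fun c : ℝ => c • ∇ f y) (by fun_prop) hcont
    hopen (hd.continuous.isCompact_sublevel_of_tendsto_cocompact hcoer (f y))
    (fun _ hc _ hx => hf.le_of_gradient_eq_smul hd hc.1 hc.2 hx)
    (Set.right_mem_Icc.2 zero_le_one) ⟨y, (one_smul ℝ _).symm⟩ hc

end

theorem stmt_4_general (d : ℕ)
    (L : EuclideanSpace ℝ (Fin d) → ℝ) (hL : ContDiff ℝ 2 L)
    (hconv : StrictConvexOn ℝ Set.univ L)
    (θs : EuclideanSpace ℝ (Fin d))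
    (hgrad0 : gradient L θs = 0)
    (H : EuclideanSpace ℝ (Fin d) → Matrix (Fin d) (Fin d) ℝ)
    (hH : ∀ x, HasFDerivAt (gradient L)
      (LinearMap.toContinuousLinearMap (Matrix.toEuclideanLin (H x))) x)
    (hpd : ∀ x, (H x).PosDef)
    (hcoer : Tendsto L (Filter.comap norm Filter.atTop) Filter.atTop) :
    ∀ θ0 : EuclideanSpace ℝ (Fin d), ∃ γ : ℝ → EuclideanSpace ℝ (Fin d),
      ContDiffOn ℝ 1 γ (Set.Icc 0 1) ∧ γ 0 = θ0 ∧ γ 1 = θs ∧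
      (∀ t ∈ Set.Icc (0:ℝ) 1, HasDerivWithinAt γ
        (-(Matrix.toEuclideanLin ((H (γ t))⁻¹) (gradient L θ0))) (Set.Icc 0 1) t) ∧
      (∀ t ∈ Set.Icc (0:ℝ) 1, gradient L (γ t) = (1 - t) • gradient L θ0) := by
  intro θ0
  have hLd : Differentiable ℝ L := hL.differentiable (by norm_num)
  have hF : ContDiff ℝ 1 (∇ L) := hL.gradient (by norm_num)
  have hH' : ∀ x, HasFDerivAt (∇ L) ((H x).toEuclideanCLE (hpd x).det_pos.ne'.isUnit :
      EuclideanSpace ℝ (Fin d) →L[ℝ] EuclideanSpace ℝ (Fin d)) x := by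
    simpa using hH
  have hemb : Topology.IsOpenEmbedding (∇ L) := isOpenEmbedding_of_hasStrictFDerivAt_equiv
    (fun x => hF.contDiffAt.hasStrictFDerivAt' (hH' x) one_ne_zero)
    (hconv.injective_gradient hLd)
  set e := hemb.toOpenPartialHomeomorph (∇ L)
  have hseg : ∀ t ∈ Set.Icc (0 : ℝ) 1, (1 - t) • ∇ L θ0 ∈ e.target := fun t ht => by
    simpa [e] using hconv.smul_gradient_mem_range hLd hF.continuous hemb.isOpenMap.isOpen_range
      (by rwa [comap_norm_atTop, Metric.cobounded_eq_cocompact] at hcoer) θ0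
      ⟨sub_nonneg.2 ht.2, sub_le_self 1 ht.1⟩
  have hu (t : ℝ) : HasDerivAt (fun t : ℝ => (1 - t) • ∇ L θ0) (-∇ L θ0) t := by
    simpa using ((hasDerivAt_id t).const_sub 1).smul_const (∇ L θ0)
  refine ⟨fun t => e.symm ((1 - t) • ∇ L θ0), fun t ht => ?_, ?_, ?_, fun t ht => ?_,
    fun t ht => e.right_inv (hseg t ht)⟩
  · exact ((e.contDiffAt_symm (hseg t ht) (hH' _) hF.contDiffAt).comp t
      (by fun_prop)).contDiffWithinAt
  · simpa using hemb.toOpenPartialHomeomorph_left_inv (∇ L) (x := θ0)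
  · simpa [← hgrad0] using hemb.toOpenPartialHomeomorph_left_inv (∇ L) (x := θs)
  · have h := (e.hasFDerivAt_symm (hseg t ht) (hH' _)).comp_hasDerivAt t (hu t)
    simp only [ContinuousLinearEquiv.coe_coe, map_neg, Matrix.toEuclideanCLE_symm_apply] at h
    exact h.hasDerivWithinAt

/-- Lemma 4 (Stability of Gradient Flow): for every starting point `θ₀` there is a
continuously differentiable path `γ : [0,1] → ℝ^d` with `γ 0 = θ₀`, `γ 1 = θ*`,
satisfying `γ'(t) = -(∇²L(γ t))⁻¹ ∇L(θ₀)`, along which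
`∇L(γ t) = (1 - t) • ∇L(θ₀)`. -/
theorem stmt_4 (d : ℕ) (hd : 1 ≤ d)
    (L : EuclideanSpace ℝ (Fin d) → ℝ) (hL : ContDiff ℝ 2 L)
    (hconv : StrictConvexOn ℝ Set.univ L)
    (θs : EuclideanSpace ℝ (Fin d))
    (hmin : ∀ θ, θ ≠ θs → L θs < L θ)
    (hgrad0 : gradient L θs = 0)
    (H : EuclideanSpace ℝ (Fin d) → Matrix (Fin d) (Fin d) ℝ)
    (hH : ∀ x, HasFDerivAt (gradient L)
      (LinearMap.toContinuousLinearMap (Matrix.toEuclideanLin (H x))) x)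
    (hpd : ∀ x, (H x).PosDef)
    (hcoer : Tendsto L (Filter.comap norm Filter.atTop) Filter.atTop) :
    ∀ θ0 : EuclideanSpace ℝ (Fin d), ∃ γ : ℝ → EuclideanSpace ℝ (Fin d),
      ContDiffOn ℝ 1 γ (Set.Icc 0 1) ∧ γ 0 = θ0 ∧ γ 1 = θs ∧
      (∀ t ∈ Set.Icc (0:ℝ) 1, HasDerivWithinAt γ
        (-(Matrix.toEuclideanLin ((H (γ t))⁻¹) (gradient L θ0))) (Set.Icc 0 1) t) ∧
      (∀ t ∈ Set.Icc (0:ℝ) 1, gradient L (γ t) = (1 - t) • gradient L θ0) :=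
  stmt_4_general d L hL hconv θs hgrad0 H hH hpd hcoer
end

section
/- Let η > 0 and λ > 0 satisfy η λ ≤ R / √d, and let θ⁺ = θ − η · V · clip(Σ⁻¹ Vᵀ ∇L(θ), λ) be the clipped Newton step at θ. Then L(θ⁺) − L(θ) ≤ −(η − η²) · Σⱼ min{ λ·|vⱼᵀ∇L(θ)|, σⱼ⁻¹·(vⱼᵀ∇L(θ))² } (Lemma 10, Descent Lemma). -/
/-!
Taylor's theorem along the segment from `θ` to `θ⁺ = θ + w` bounds `L θ⁺ - L θ` by
`⟪∇L θ, w⟫ + ½ max_t wᵀ ∇²L(θ + t w) w`. Each clipped coordinate has size at most `λ`, so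
`‖w‖ ≤ η λ √d ≤ R`, and Assumption 2 replaces the Hessian on the segment by `2 ∇²L θ`. In the
eigenbasis, with `g = Vᵀ ∇L θ` and `u_j = clip(g_j / σ_j, λ)`, this gives
`L θ⁺ - L θ ≤ -η ∑ g_j u_j + η² ∑ σ_j u_j²`. Clipping keeps `u_j` between `0` and `g_j / σ_j`,
so `σ_j u_j² ≤ g_j u_j = min (λ |g_j|) (g_j² / σ_j)`.
-/

open Matrix Set
open scoped RealInnerProductSpace

def clipR (lam x : ℝ) : ℝ := max (min x lam) (-lam)

theorem le_add_deriv_mul_add_of_deriv2_le {φ φ' φ'' : ℝ → ℝ} {a b C : ℝ} (hab : a ≤ b)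
    (hφ : ∀ t, HasDerivAt φ (φ' t) t) (hφ' : ∀ t, HasDerivAt φ' (φ'' t) t)
    (hC : ∀ t ∈ Icc a b, φ'' t ≤ C) :
    φ b ≤ φ a + φ' a * (b - a) + C / 2 * (b - a) ^ 2 := by
  have hφ'_le : ∀ t ∈ Icc a b, φ' t ≤ φ' a + C * (t - a) := by
    refine image_le_of_deriv_right_le_deriv_boundary (f' := φ'')
      (B := fun t => φ' a + C * (t - a)) (B' := fun _ => C)
      (fun t _ => (hφ' t).continuousAt.continuousWithinAt)
      (fun t _ => (hφ' t).hasDerivWithinAt) (by simp) (by fun_prop) (fun t _ => ?_)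
      (fun t ht => hC t (Ico_subset_Icc_self ht))
    simpa using (((hasDerivAt_id t).sub_const a).const_mul C |>.const_add (φ' a)).hasDerivWithinAt
  refine image_le_of_deriv_right_le_deriv_boundary (f' := φ')
    (B := fun t => φ a + φ' a * (t - a) + C / 2 * (t - a) ^ 2) (B' := fun t => φ' a + C * (t - a))
    (fun t _ => (hφ t).continuousAt.continuousWithinAt)
    (fun t _ => (hφ t).hasDerivWithinAt) (by simp) (by fun_prop) (fun t _ => ?_)
    (fun t ht => hφ'_le t (Ico_subset_Icc_self ht)) (right_mem_Icc.2 hab)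
  have hsub := (hasDerivAt_id t).sub_const a
  refine HasDerivAt.hasDerivWithinAt ?_
  convert ((hsub.const_mul (φ' a)).const_add (φ a)).add ((hsub.pow 2).const_mul (C / 2)) using 1
  · funext s
    simp only [Pi.add_apply, Pi.pow_apply, id]
  · norm_num
    ring

section Descent

variable {E : Type*} [NormedAddCommGroup E] [InnerProductSpace ℝ E] [CompleteSpace E]

theorem le_add_inner_gradient_add_of_hessian_le {L : E → ℝ} (hL : Differentiable ℝ L)
    {H : E → E →L[ℝ] E} (hH : ∀ x, HasFDerivAt (gradient L) (H x) x) (x w : E) {C : ℝ}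
    (hC : ∀ t ∈ Icc (0 : ℝ) 1, ⟪H (x + t • w) w, w⟫ ≤ C) :
    L (x + w) ≤ L x + ⟪gradient L x, w⟫ + C / 2 := by
  have hline : ∀ t : ℝ, HasDerivAt (fun t : ℝ => x + t • w) w t := fun t => by
    simpa using ((hasDerivAt_id t).smul_const w).const_add x
  have hφ : ∀ t : ℝ, HasDerivAt (fun t => L (x + t • w)) ⟪gradient L (x + t • w), w⟫ t :=
    fun t => by
      simpa [Function.comp_def, InnerProductSpace.toDual_apply_apply] using
        (hL _).hasGradientAt.hasFDerivAt.comp_hasDerivAt t (hline t)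
  have hφ' : ∀ t : ℝ, HasDerivAt (fun t => ⟪gradient L (x + t • w), w⟫)
      ⟪H (x + t • w) w, w⟫ t := fun t =>
    ((hH _).comp_hasDerivAt t (hline t)).inner ℝ (hasDerivAt_const t w) |>.congr_deriv (by simp)
  simpa using le_add_deriv_mul_add_of_deriv2_le zero_le_one hφ hφ' hC

end Descent

theorem abs_clipR_le {lam : ℝ} (hlam : 0 ≤ lam) (x : ℝ) : |clipR lam x| ≤ lam :=
  abs_le.2 ⟨le_max_right _ _, max_le (min_le_right _ _) (by linarith)⟩

theorem sq_clipR_le_mul_clipR {lam : ℝ} (hlam : 0 ≤ lam) (x : ℝ) :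
    clipR lam x ^ 2 ≤ x * clipR lam x := by
  unfold clipR
  rcases le_total x lam with h | h
  · rw [min_eq_left h]
    rcases le_total (-lam) x with h' | h'
    · rw [max_eq_left h']
      nlinarith
    · rw [max_eq_right h']
      nlinarith
  · rw [min_eq_right h, max_eq_left (by linarith)]
    nlinarith

theorem mul_clipR_eq_min {lam : ℝ} (hlam : 0 ≤ lam) (x : ℝ) :
    x * clipR lam x = min (lam * |x|) (x ^ 2) := by
  unfold clipR
  rcases le_total x lam with h | h
  · rw [min_eq_left h]
    rcases le_total (-lam) x with h' | h'
    · rw [max_eq_left h', min_eq_right]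
      · ring
      · rw [← sq_abs]
        nlinarith [abs_le.2 ⟨h', h⟩, abs_nonneg x]
    · rw [max_eq_right h', abs_of_nonpos (by linarith), min_eq_left (by nlinarith)]
      ring
  · rw [min_eq_right h, max_eq_left (by linarith), abs_of_nonneg (by linarith),
      min_eq_left (by nlinarith)]
    ring

theorem mul_clipR_inv_mul {σ lam : ℝ} (hσ : 0 < σ) (hlam : 0 ≤ lam) (g : ℝ) :
    g * clipR lam (σ⁻¹ * g) = min (lam * |g|) (σ⁻¹ * g ^ 2) := by
  calc g * clipR lam (σ⁻¹ * g) = σ * (σ⁻¹ * g * clipR lam (σ⁻¹ * g)) := by field_simp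
    _ = σ * min (lam * |σ⁻¹ * g|) ((σ⁻¹ * g) ^ 2) := by rw [mul_clipR_eq_min hlam]
    _ = min (lam * |g|) (σ⁻¹ * g ^ 2) := by
      rw [mul_min_of_nonneg _ _ hσ.le, abs_mul, abs_inv, abs_of_pos hσ]
      congr 1 <;> field_simp

theorem mul_sq_clipR_inv_mul_le {σ lam : ℝ} (hσ : 0 < σ) (hlam : 0 ≤ lam) (g : ℝ) :
    σ * clipR lam (σ⁻¹ * g) ^ 2 ≤ g * clipR lam (σ⁻¹ * g) := by
  have h := mul_le_mul_of_nonneg_left (sq_clipR_le_mul_clipR hlam (σ⁻¹ * g)) hσ.le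
  rwa [← mul_assoc, ← mul_assoc, mul_inv_cancel₀ hσ.ne', one_mul] at h

section Coordinates

variable {n : Type*} [Fintype n]

theorem inner_toLp_mulVec (a : EuclideanSpace ℝ n) (V : Matrix n n ℝ) (u : n → ℝ) :
    ⟪a, WithLp.toLp 2 (V *ᵥ u)⟫ = (a.ofLp ᵥ* V) ⬝ᵥ u := by
  rw [EuclideanSpace.inner_eq_star_dotProduct, star_trivial, dotProduct_comm,
    dotProduct_mulVec]

theorem norm_toLp_mulVec_of_transpose_mul_self [DecidableEq n] {V : Matrix n n ℝ}
    (hV : Vᵀ * V = 1) (u : n → ℝ) : ‖WithLp.toLp 2 (V *ᵥ u)‖ = ‖WithLp.toLp 2 u‖ := by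
  rw [← sq_eq_sq₀ (norm_nonneg _) (norm_nonneg _), ← real_inner_self_eq_norm_sq,
    ← real_inner_self_eq_norm_sq, inner_toLp_mulVec, WithLp.ofLp_toLp, ← mulVec_transpose,
    mulVec_mulVec, hV, one_mulVec, real_inner_comm, EuclideanSpace.inner_toLp_toLp, star_trivial]

theorem norm_toLp_le_sqrt_card_mul {u : n → ℝ} {c : ℝ} (hc : 0 ≤ c) (hu : ∀ j, |u j| ≤ c) :
    ‖WithLp.toLp 2 u‖ ≤ √(Fintype.card n) * c := by
  rw [EuclideanSpace.norm_eq, ← Real.sqrt_sq hc, ← Real.sqrt_mul (Nat.cast_nonneg _)]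
  gcongr
  calc ∑ j, ‖u j‖ ^ 2 ≤ ∑ _j : n, c ^ 2 := by
        gcongr with j
        simpa using hu j
    _ = Fintype.card n * c ^ 2 := by simp

theorem norm_smul_toLp_mulVec_le [DecidableEq n] {V : Matrix n n ℝ} (hV : Vᵀ * V = 1)
    {η lam R : ℝ} (hη : 0 < η) (hlam : 0 < lam) (hηlam : η * lam ≤ R / √(Fintype.card n))
    {u : n → ℝ} (hu : ∀ j, |u j| ≤ lam) : ‖η • WithLp.toLp 2 (V *ᵥ u)‖ ≤ R := by
  -- `R / 0 = 0`, so `√(card n) = 0` would contradict `0 < η * lam`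
  have hcard : 0 < √(Fintype.card n : ℝ) := by
    refine (Real.sqrt_nonneg _).lt_of_ne fun h => ?_
    rw [← h, div_zero] at hηlam
    nlinarith [mul_pos hη hlam]
  rw [le_div_iff₀ hcard] at hηlam
  calc ‖η • WithLp.toLp 2 (V *ᵥ u)‖ = η * ‖WithLp.toLp 2 u‖ := by
        rw [norm_smul, Real.norm_of_nonneg hη.le, norm_toLp_mulVec_of_transpose_mul_self hV]
    _ ≤ η * (√(Fintype.card n) * lam) := by gcongr; exact norm_toLp_le_sqrt_card_mul hlam.le hu
    _ ≤ R := by linarith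

end Coordinates

theorem hessQF_smul {d : ℕ} (A : Matrix (Fin d) (Fin d) ℝ) (c : ℝ)
    (v : EuclideanSpace ℝ (Fin d)) :
    hessQF A (c • v) = c ^ 2 * hessQF A v := by
  rw [hessQF, hessQF, map_smul, real_inner_smul_left, real_inner_smul_right, sq, mul_assoc]

theorem hessQF_toLp_mulVec {d : ℕ} (A V : Matrix (Fin d) (Fin d) ℝ) (u : Fin d → ℝ) :
    hessQF A (WithLp.toLp 2 (V *ᵥ u)) = u ⬝ᵥ ((Vᵀ * A * V) *ᵥ u) := by
  rw [hessQF, real_inner_comm, toLpLin_toLp, toLin'_apply, inner_toLp_mulVec, WithLp.ofLp_toLp,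
    ← mulVec_transpose, dotProduct_comm, mulVec_mulVec, mulVec_mulVec]

theorem hessQF_toLp_mulVec_of_diagonal {d : ℕ} {A V : Matrix (Fin d) (Fin d) ℝ}
    {σ : Fin d → ℝ} (hdiag : Vᵀ * A * V = diagonal σ) (u : Fin d → ℝ) :
    hessQF A (WithLp.toLp 2 (V *ᵥ u)) = ∑ j, σ j * u j ^ 2 := by
  rw [hessQF_toLp_mulVec, hdiag]
  exact Finset.sum_congr rfl fun j _ => by rw [mulVec_diagonal]; ring

theorem stmt_13_general (d : ℕ)
    (L : EuclideanSpace ℝ (Fin d) → ℝ) (hL : ContDiff ℝ 2 L)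
    (H : EuclideanSpace ℝ (Fin d) → Matrix (Fin d) (Fin d) ℝ)
    (hH : ∀ x, HasFDerivAt (gradient L)
      (LinearMap.toContinuousLinearMap (Matrix.toEuclideanLin (H x))) x)
    (R : ℝ)
    (hA2 : ∀ θ θ' : EuclideanSpace ℝ (Fin d), ‖θ - θ'‖ ≤ R →
      ∀ v, (1/2) * hessQF (H θ') v ≤ hessQF (H θ) v ∧
        hessQF (H θ) v ≤ 2 * hessQF (H θ') v)
    (θ : EuclideanSpace ℝ (Fin d))
    (V : Matrix (Fin d) (Fin d) ℝ) (hV : Vᵀ * V = 1)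
    (σ : Fin d → ℝ) (hσ : ∀ j, 0 < σ j)
    (hdiag : Vᵀ * H θ * V = Matrix.diagonal σ)
    (η lam : ℝ) (hη : 0 < η) (hlam : 0 < lam)
    (hηlam : η * lam ≤ R / Real.sqrt d)
    (θp : EuclideanSpace ℝ (Fin d))
    (hθp : θp = θ - η • (WithLp.equiv 2 (Fin d → ℝ)).symm
      (V.mulVec (fun j => clipR lam ((σ j)⁻¹ *
        Matrix.vecMul ((WithLp.equiv 2 (Fin d → ℝ)) (gradient L θ)) V j)))) :
    L θp - L θ ≤ -(η - η ^ 2) * ∑ j, min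
      (lam * |Matrix.vecMul ((WithLp.equiv 2 (Fin d → ℝ)) (gradient L θ)) V j|)
      ((σ j)⁻¹ *
        (Matrix.vecMul ((WithLp.equiv 2 (Fin d → ℝ)) (gradient L θ)) V j) ^ 2) := by
  set g := Matrix.vecMul ((WithLp.equiv 2 (Fin d → ℝ)) (gradient L θ)) V
  set u : Fin d → ℝ := fun j => clipR lam ((σ j)⁻¹ * g j)
  set w : EuclideanSpace ℝ (Fin d) := -η • WithLp.toLp 2 (V *ᵥ u)
  have hθpw : θp = θ + w := by
    rw [hθp, sub_eq_add_neg, ← neg_smul]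
    rfl
  have hw : ‖w‖ ≤ R := by
    rw [show w = -(η • _) from neg_smul _ _, norm_neg]
    exact norm_smul_toLp_mulVec_le hV hη hlam (by simpa using hηlam)
      fun j => abs_clipR_le hlam.le _
  have hstable : ∀ t ∈ Icc (0 : ℝ) 1, ⟪LinearMap.toContinuousLinearMap
      (Matrix.toEuclideanLin (H (θ + t • w))) w, w⟫ ≤ 2 * hessQF (H θ) w := by
    intro t ht
    have hdist : ‖θ + t • w - θ‖ ≤ R := by
      rw [add_sub_cancel_left, norm_smul, Real.norm_of_nonneg ht.1]
      nlinarith [norm_nonneg w, ht.2]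
    simpa [hessQF, real_inner_comm] using (hA2 _ _ hdist w).2
  have hdescent := le_add_inner_gradient_add_of_hessian_le
    (hL.differentiable (by norm_num)) hH θ w hstable
  have hlin : ⟪gradient L θ, w⟫ = -η * ∑ j, g j * u j := by
    rw [real_inner_smul_right, inner_toLp_mulVec]
    rfl
  have hquad : hessQF (H θ) w = η ^ 2 * ∑ j, σ j * u j ^ 2 := by
    rw [hessQF_smul, neg_sq, hessQF_toLp_mulVec_of_diagonal hdiag]
  have hsum_min : ∑ j, g j * u j = ∑ j, min (lam * |g j|) ((σ j)⁻¹ * g j ^ 2) :=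
    Finset.sum_congr rfl fun j _ => mul_clipR_inv_mul (hσ j) hlam.le (g j)
  have hsum_le : ∑ j, σ j * u j ^ 2 ≤ ∑ j, g j * u j :=
    Finset.sum_le_sum fun j _ => mul_sq_clipR_inv_mul_le (hσ j) hlam.le (g j)
  rw [← hsum_min, hθpw]
  nlinarith [mul_le_mul_of_nonneg_left hsum_le (sq_nonneg η)]

/-- Lemma 10 (Descent Lemma): the clipped Newton step decreases the loss by at least (η - η²) times the clipped quantity. -/
theorem stmt_13 (d : ℕ) (hd : 1 ≤ d)
    (L : EuclideanSpace ℝ (Fin d) → ℝ) (hL : ContDiff ℝ 2 L)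
    (hconv : StrictConvexOn ℝ Set.univ L)
    (θs : EuclideanSpace ℝ (Fin d))
    (hmin : ∀ θ, θ ≠ θs → L θs < L θ)
    (hgrad0 : gradient L θs = 0)
    (H : EuclideanSpace ℝ (Fin d) → Matrix (Fin d) (Fin d) ℝ)
    (hH : ∀ x, HasFDerivAt (gradient L)
      (LinearMap.toContinuousLinearMap (Matrix.toEuclideanLin (H x))) x)
    (hpd : ∀ x, (H x).PosDef)
    (μ : ℝ) (hμpos : 0 < μ)
    (hμlb : ∀ v : EuclideanSpace ℝ (Fin d), μ * ‖v‖ ^ 2 ≤ hessQF (H θs) v)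
    (hμeig : ∃ v : EuclideanSpace ℝ (Fin d), v ≠ 0 ∧
      Matrix.toEuclideanLin (H θs) v = μ • v)
    (R : ℝ) (hR : 0 < R)
    (hA2 : ∀ θ θ' : EuclideanSpace ℝ (Fin d), ‖θ - θ'‖ ≤ R →
      ∀ v, (1/2) * hessQF (H θ') v ≤ hessQF (H θ) v ∧
        hessQF (H θ) v ≤ 2 * hessQF (H θ') v)
    (θ : EuclideanSpace ℝ (Fin d))
    (V : Matrix (Fin d) (Fin d) ℝ) (hV : Vᵀ * V = 1)
    (σ : Fin d → ℝ) (hσ : ∀ j, 0 < σ j)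
    (hdiag : Vᵀ * H θ * V = Matrix.diagonal σ)
    (η lam : ℝ) (hη : 0 < η) (hlam : 0 < lam)
    (hηlam : η * lam ≤ R / Real.sqrt d)
    (θp : EuclideanSpace ℝ (Fin d))
    (hθp : θp = θ - η • (WithLp.equiv 2 (Fin d → ℝ)).symm
      (V.mulVec (fun j => clipR lam ((σ j)⁻¹ *
        Matrix.vecMul ((WithLp.equiv 2 (Fin d → ℝ)) (gradient L θ)) V j)))) :
    L θp - L θ ≤ -(η - η ^ 2) * ∑ j, min
      (lam * |Matrix.vecMul ((WithLp.equiv 2 (Fin d → ℝ)) (gradient L θ)) V j|)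
      ((σ j)⁻¹ *
        (Matrix.vecMul ((WithLp.equiv 2 (Fin d → ℝ)) (gradient L θ)) V j) ^ 2) :=
  stmt_13_general d L hL H hH R hA2 θ V hV σ hσ hdiag η lam hη hlam hηlam θp hθp
end
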